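/- arXiv:math/0410500 — 4 statements merged into one kernel-verified Lean document; each statement's English description precedes it below -/
import Mathlib

section
/- If a sequence of homeomorphisms f_n of a compact metric space Y has the attractor-repeller property with attractor a and repeller r (i.e., f_n converges to the constant a uniformly on the complement of every open neighborhood of r), then the sequence of inverses f_n^{-1} has the attractor-repeller property with attractor r and repeller a. -/
open Filter Topology

/-- `(f n)` converges to the constant `a` uniformly outside every open neighborhood of `r`. -/
def AttractorRepeller {Y : Type*} [MetricSpace Y] (f : ℕ → Y → Y) (a r : Y) : Prop :=
  ∀ U : Set Y, IsOpen U → r ∈ U → ∀ ε : ℝ, 0 < ε →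
    ∃ N : ℕ, ∀ n ≥ N, ∀ x ∉ U, dist (f n x) a < ε

/- Given a neighbourhood `U` of `a` containing `ball a δ`, for large `n` every point outside
`ball r ε` is sent into `ball a δ ⊆ U`; so a point outside `U` can only come from `ball r ε`. -/
theorem AttractorRepeller.symm {Y : Type*} [MetricSpace Y] {e : ℕ → Y ≃ Y} {a r : Y}
    (h : AttractorRepeller (fun n => e n) a r) :
    AttractorRepeller (fun n => (e n).symm) r a := by
  intro U hU haU ε hε
  obtain ⟨δ, hδ, hball⟩ := Metric.isOpen_iff.1 hU a haU
  obtain ⟨N, hN⟩ := h (Metric.ball r ε) Metric.isOpen_ball (Metric.mem_ball_self hε) δ hδ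
  refine ⟨N, fun n hn x hxU => ?_⟩
  by_contra hfar
  have hnear : dist (e n ((e n).symm x)) a < δ := hN n hn _ hfar
  rw [Equiv.apply_symm_apply] at hnear
  exact hxU (hball hnear)

theorem inverses_attractorRepeller_general {Y : Type*} [MetricSpace Y]
    (f : ℕ → Y ≃ₜ Y) (a r : Y)
    (h : AttractorRepeller (fun n x => f n x) a r) :
    AttractorRepeller (fun n x => (f n).symm x) r a :=
  AttractorRepeller.symm (e := fun n => (f n).toEquiv) h

/-- If a sequence of homeomorphisms of a compact metric space has the attractor-repeller
property with attractor `a` and repeller `r`, then the inverses have it with attractor `r`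
and repeller `a`. -/
theorem inverses_attractorRepeller {Y : Type*} [MetricSpace Y] [CompactSpace Y]
    (f : ℕ → Y ≃ₜ Y) (a r : Y)
    (h : AttractorRepeller (fun n x => f n x) a r) :
    AttractorRepeller (fun n x => (f n).symm x) r a :=
  inverses_attractorRepeller_general f a r h
end

section
/- Let Y be a compact metric space, let h_n be homeomorphisms of Y converging uniformly to a homeomorphism h, and let f_n be homeomorphisms of Y converging to the constant a uniformly outside every open neighborhood of r. Then f_n ∘ h_n converges to the constant a uniformly outside every open neighborhood of h^{-1}(r). -/
/-!
For an open `U ∋ H⁻¹ r`, the set `H '' Uᶜ` is compact and misses `r`, so it avoids a ball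
`ball r δ`. Since `h n → H` uniformly, eventually `h n` maps `Uᶜ` outside `ball r (δ / 2)`,
and there `f n` is already uniformly close to `a`.
-/

open Filter Topology Set Metric

theorem TendstoUniformlyOn.eventually_mapsTo_compl_ball {ι X Y : Type*} [TopologicalSpace X]
    [MetricSpace Y] {p : Filter ι} {F : ι → X → Y} {G : X → Y} {K : Set X}
    (hK : IsCompact K) (hG : ContinuousOn G K) (hF : TendstoUniformlyOn F G p K) {r : Y}
    (hr : r ∉ G '' K) : ∃ δ > 0, ∀ᶠ n in p, MapsTo (F n) K (ball r δ)ᶜ := by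
  obtain ⟨δ, hδ, hball⟩ :=
    Metric.isOpen_iff.mp (hK.image_of_continuousOn hG).isClosed.isOpen_compl r hr
  refine ⟨δ / 2, half_pos hδ, ?_⟩
  filter_upwards [Metric.tendstoUniformlyOn_iff.mp hF (δ / 2) (half_pos hδ)] with n hn x hx hFx
  have hGx : dist (G x) r < δ := calc
    dist (G x) r ≤ dist (G x) (F n x) + dist (F n x) r := dist_triangle _ _ _
    _ < δ / 2 + δ / 2 := add_lt_add (hn x hx) (mem_ball.mp hFx)
    _ = δ := add_halves δ
  exact hball hGx (mem_image_of_mem G hx)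

theorem AttractorRepeller.comp {Y : Type*} [MetricSpace Y] {f g : ℕ → Y → Y} {a r r' : Y}
    (hf : AttractorRepeller f a r)
    (hg : ∀ U : Set Y, IsOpen U → r' ∈ U →
      ∃ V : Set Y, IsOpen V ∧ r ∈ V ∧ ∀ᶠ n in atTop, MapsTo (g n) Uᶜ Vᶜ) :
    AttractorRepeller (fun n x => f n (g n x)) a r' := by
  intro U hU hr'U ε hε
  obtain ⟨V, hV, hrV, hmaps⟩ := hg U hU hr'U
  obtain ⟨N₁, hN₁⟩ := hf V hV hrV ε hε
  obtain ⟨N₂, hN₂⟩ := eventually_atTop.mp hmaps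
  exact ⟨max N₁ N₂, fun n hn x hx =>
    hN₁ n (le_of_max_le_left hn) (g n x) (hN₂ n (le_of_max_le_right hn) hx)⟩

/-- Precomposing a sequence with attractor `a` and repeller `r` by homeomorphisms
converging uniformly to `h` yields a sequence with attractor `a` and repeller `h⁻¹ r`. -/
theorem precomp_attractorRepeller {Y : Type*} [MetricSpace Y] [CompactSpace Y]
    (h : ℕ → Y ≃ₜ Y) (H : Y ≃ₜ Y) (f : ℕ → Y ≃ₜ Y) (a r : Y)
    (hh : TendstoUniformly (fun n x => h n x) H atTop)
    (hf : AttractorRepeller (fun n x => f n x) a r) :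
    AttractorRepeller (fun n x => f n (h n x)) a (H.symm r) := by
  refine hf.comp (g := fun n x => h n x) fun U hU hrU => ?_
  have hr : r ∉ H '' Uᶜ := by
    rw [H.image_compl, H.image_eq_preimage_symm]
    exact not_not_intro hrU
  obtain ⟨δ, hδ, hmaps⟩ := hh.tendstoUniformlyOn.eventually_mapsTo_compl_ball
    hU.isClosed_compl.isCompact H.continuous.continuousOn hr
  exact ⟨ball r δ, isOpen_ball, mem_ball_self hδ, hmaps⟩
end

section
/- Let (T_n) be a sequence of isometries of a proper, unbounded metric space N such that no subsequence of (T_n) converges pointwise to a map N → N. Then for every compact set C ⊆ N and every R > 0 there is an index N₀ such that for all n ≥ N₀ and all x ∈ C, dist(T_n(x), o) > R, where o is a fixed basepoint; i.e., T_n → ∞ locally uniformly on N. -/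
/-!
Isometries form a uniformly equicontinuous family, so if `T n o` stays bounded along a
subsequence, a diagonal extraction over a countable dense subset of the proper space `N`
gives a further subsequence converging pointwise (an Arzelà–Ascoli argument). Hence
`dist (T n o) o → ∞`, and this is uniform on a bounded set `C` because
`dist (T n x) (T n o) = dist x o` is bounded for `x ∈ C`.
-/

open Filter Topology Set Metric Bornology
open scoped NNReal

section PointwiseCompactness

variable {X Y : Type*} [PseudoMetricSpace X] [PseudoMetricSpace Y] {F : ℕ → X → Y}

theorem cauchySeq_of_equicontinuous_of_dense (hF : Equicontinuous F) {s : Set X}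
    (hs : Dense s) (h : ∀ y ∈ s, CauchySeq fun n => F n y) (x : X) :
    CauchySeq fun n => F n x := by
  refine Metric.cauchySeq_iff.2 fun ε hε => ?_
  obtain ⟨δ, hδ, hclose⟩ := Metric.equicontinuousAt_iff.1 (hF x) (ε / 3) (by positivity)
  obtain ⟨y, hys, hxy⟩ := hs.exists_dist_lt x hδ
  obtain ⟨M, hM⟩ := Metric.cauchySeq_iff.1 (h y hys) (ε / 3) (by positivity)
  refine ⟨M, fun m hm n hn => ?_⟩
  have hyx : dist y x < δ := by rwa [dist_comm]
  calc dist (F m x) (F n x)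
      ≤ dist (F m x) (F m y) + dist (F m y) (F n y) + dist (F n y) (F n x) :=
        dist_triangle4 _ _ _ _
    _ < ε / 3 + ε / 3 + ε / 3 := by
        gcongr
        · exact hclose y hyx m
        · exact hM m hm n hn
        · rw [dist_comm]; exact hclose y hyx n
    _ = ε := by ring

theorem exists_strictMono_tendsto_of_equicontinuous [TopologicalSpace.SeparableSpace X] [ProperSpace Y]
    (hF : Equicontinuous F) (hb : ∀ x, IsBounded (range fun n => F n x)) :
    ∃ φ : ℕ → ℕ, StrictMono φ ∧ ∃ g : X → Y, ∀ x, Tendsto (fun n => F (φ n) x) atTop (𝓝 (g x)) := by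
  obtain ⟨s, hsc, hsd⟩ := TopologicalSpace.exists_countable_dense X
  have := hsc.to_subtype
  have hK : IsCompact (univ.pi fun y : s => closure (range fun n => F n y)) :=
    isCompact_univ_pi fun y => (hb y).isCompact_closure
  obtain ⟨_, -, φ, hφ, hlim⟩ := hK.tendsto_subseq (x := fun n (y : s) => F n y)
    fun n y _ => subset_closure (mem_range_self n)
  have hcauchy (x : X) : CauchySeq fun n => F (φ n) x :=
    cauchySeq_of_equicontinuous_of_dense (hF.comp φ) hsd
      (fun y hy => (tendsto_pi_nhds.1 hlim ⟨y, hy⟩).cauchySeq) x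
  choose g hg using fun x => cauchySeq_tendsto_of_complete (hcauchy x)
  exact ⟨φ, hφ, g, hg⟩

theorem tendsto_dist_atTop_of_forall_not_tendsto_subseq [TopologicalSpace.SeparableSpace X] [ProperSpace Y]
    {K : ℝ≥0} (hF : ∀ n, LipschitzWith K (F n))
    (hdiv : ∀ φ : ℕ → ℕ, StrictMono φ → ∀ g : X → Y,
      ¬ ∀ x, Tendsto (fun n => F (φ n) x) atTop (𝓝 (g x)))
    (x : X) (o : Y) : Tendsto (fun n => dist (F n x) o) atTop atTop := by
  refine tendsto_atTop.2 fun R => ?_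
  by_contra hR
  obtain ⟨ψ, hψ, hψR⟩ := extraction_of_frequently_atTop (not_eventually.1 hR)
  have hb (y : X) : IsBounded (range fun n => F (ψ n) y) := by
    refine (isBounded_closedBall (x := o) (r := K * dist y x + R)).subset ?_
    rintro _ ⟨n, rfl⟩
    calc dist (F (ψ n) y) o ≤ dist (F (ψ n) y) (F (ψ n) x) + dist (F (ψ n) x) o :=
          dist_triangle _ _ _
      _ ≤ K * dist y x + R := add_le_add ((hF _).dist_le_mul y x) (not_le.1 (hψR n)).le
  obtain ⟨φ, hφ, g, hg⟩ := exists_strictMono_tendsto_of_equicontinuous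
    (LipschitzWith.uniformEquicontinuous _ K fun n => hF (ψ n)).equicontinuous hb
  exact hdiv (ψ ∘ φ) (hψ.comp hφ) g hg

end PointwiseCompactness

theorem isometries_tend_to_infty_general {N : Type*} [MetricSpace N] [ProperSpace N]
    (o : N)
    (T : ℕ → N → N) (hiso : ∀ n, Isometry (T n))
    (hdiv : ∀ φ : ℕ → ℕ, StrictMono φ → ∀ g : N → N,
      ¬ ∀ x : N, Tendsto (fun n => T (φ n) x) atTop (nhds (g x))) :
    ∀ C : Set N, IsCompact C → ∀ R : ℝ, 0 < R →
      ∃ N₀ : ℕ, ∀ n ≥ N₀, ∀ x ∈ C, R < dist (T n x) o := by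
  intro C hC R _
  obtain ⟨r, hr⟩ := hC.isBounded.subset_closedBall o
  have hfar := tendsto_dist_atTop_of_forall_not_tendsto_subseq
    (fun n => (hiso n).lipschitz) hdiv o o
  obtain ⟨N₀, hN₀⟩ := eventually_atTop.1 (hfar.eventually_gt_atTop (R + r))
  refine ⟨N₀, fun n hn x hx => ?_⟩
  have hxo : dist (T n x) (T n o) ≤ r := by rw [(hiso n).dist_eq]; exact hr hx
  linarith [hN₀ n hn, dist_triangle (T n o) (T n x) o, dist_comm (T n x) (T n o)]

/-- If no subsequence of a sequence of surjective isometries of a proper, unbounded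
metric space converges pointwise, then the sequence tends to infinity locally
uniformly. -/
theorem isometries_tend_to_infty {N : Type*} [MetricSpace N] [ProperSpace N]
    (hunb : ¬ Bornology.IsBounded (Set.univ : Set N)) (o : N)
    (T : ℕ → N → N) (hiso : ∀ n, Isometry (T n)) (hsurj : ∀ n, Function.Surjective (T n))
    (hdiv : ∀ φ : ℕ → ℕ, StrictMono φ → ∀ g : N → N,
      ¬ ∀ x : N, Tendsto (fun n => T (φ n) x) atTop (nhds (g x))) :
    ∀ C : Set N, IsCompact C → ∀ R : ℝ, 0 < R →
      ∃ N₀ : ℕ, ∀ n ≥ N₀, ∀ x ∈ C, R < dist (T n x) o :=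
  isometries_tend_to_infty_general o T hiso hdiv
end

section
/- Let X be a compact metric space and (f_n) a sequence of η-quasisymmetric homeomorphisms of X (with common control function η) such that there exist three points x₀, x₁ and a constant c > 0 with f_n(x₀) = x₀ for all n and dist(f_n(x₁), x₀) = c for all n. Then (f_n) has a subsequence converging uniformly on X, and the limit is either constant or an η-quasisymmetric embedding; moreover since dist(limit(x₁), x₀) = c > 0, the limit is non-constant, hence an embedding. -/
open Filter Topology

/-- `f` is `η`-quasisymmetric. -/
def QS {X : Type*} [MetricSpace X] (η : ℝ → ℝ) (f : X → X) : Prop :=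
  ∀ a b x : X, ∀ t : ℝ, 0 ≤ t → dist x a ≤ t * dist x b →
    dist (f x) (f a) ≤ η t * dist (f x) (f b)

/-!
Given two distinct points `x₀, x₁`, every `x` lies at distance at least `dist x₀ x₁ / 2` from
one of them, say `z`; quasisymmetry for the triple `(x, y, z)` then gives
`dist (f x) (f y) ≤ η (2 dist x y / dist x₀ x₁) · diam X`, a modulus of continuity shared by all
`η`-quasisymmetric self-maps. By Arzelà–Ascoli a subsequence converges uniformly, and the
defining inequality passes to the limit. A quasisymmetric map identifying two points is
constant, while the limit keeps `x₁` at distance `c > 0` from the fixed point `x₀`; so the limit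
is injective, hence an embedding of the compact space `X`.
-/

open Metric Set Function

theorem isCompact_setOf_dist_le_modulus {X Y : Type*} [PseudoMetricSpace X] [MetricSpace Y]
    [CompactSpace Y] {b : ℝ → ℝ} (hb : Tendsto b (𝓝 0) (𝓝 0)) :
    IsCompact {g : C(X, Y) | ∀ x y, dist (g x) (g y) ≤ b (dist x y)} := by
  set T : Set (X → Y) := {g | ∀ x y, dist (g x) (g y) ≤ b (dist x y)}
  have hT : IsClosed T := by
    simp only [T, ofPred_forall]
    exact isClosed_iInter fun x => isClosed_iInter fun y =>
      isClosed_le ((continuous_apply x).dist (continuous_apply y)) continuous_const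
  have himage :
      ContinuousMap.toFun '' {g : C(X, Y) | ∀ x y, dist (g x) (g y) ≤ b (dist x y)} = T := by
    refine Subset.antisymm (image_subset_iff.2 fun g hg => hg) fun g hg => ?_
    have hcont : Continuous g := (equicontinuous_of_continuity_modulus b hb (fun _ : Unit => g)
      fun x y _ => hg x y).continuous ()
    exact ⟨⟨g, hcont⟩, hg, rfl⟩
  refine ArzelaAscoli.isCompact_of_equicontinuous _ (himage ▸ hT.isCompact) ?_
  exact equicontinuous_of_continuity_modulus b hb _ fun x y g => g.2 x y

namespace QS

variable {X : Type*} [MetricSpace X] {η : ℝ → ℝ}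

theorem nonneg {f : X → X} (hf : QS η f) (hinj : Injective f) {x y : X} (hxy : x ≠ y) {t : ℝ}
    (ht : 0 ≤ t) : 0 ≤ η t := by
  have h := hf x y x t ht (by rw [dist_self]; positivity)
  rw [dist_self] at h
  exact (mul_nonneg_iff_of_pos_right (dist_pos.2 (hinj.ne hxy))).1 h

theorem dist_le [BoundedSpace X] {f : X → X} (hf : QS η f) (hη : ∀ t, 0 ≤ t → 0 ≤ η t)
    {x₀ x₁ : X} (hx : x₀ ≠ x₁) (x y : X) :
    dist (f x) (f y) ≤ η (2 * dist x y / dist x₀ x₁) * diam (univ : Set X) := by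
  set d := dist x₀ x₁
  have hd : 0 < d := dist_pos.2 hx
  obtain ⟨z, hz⟩ : ∃ z, d ≤ 2 * dist x z := by
    by_contra! h
    linarith [dist_triangle_left x₀ x₁ x, h x₀, h x₁]
  set t := 2 * dist x y / d
  have ht : 0 ≤ t := by positivity
  have hxy : dist x y ≤ t * dist x z := by
    rw [div_mul_eq_mul_div, le_div_iff₀ hd]
    nlinarith [dist_nonneg (x := x) (y := y)]
  calc dist (f x) (f y) ≤ η t * dist (f x) (f z) := hf y z x t ht hxy
    _ ≤ η t * diam (univ : Set X) :=
      mul_le_mul_of_nonneg_left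
        (dist_le_diam_of_mem (Bornology.isBounded_univ.2 ‹_›) (mem_univ _) (mem_univ _))
        (hη t ht)

theorem exists_modulus [BoundedSpace X] (hη : Tendsto η (𝓝[≥] 0) (𝓝 0))
    (hη_nonneg : ∀ t, 0 ≤ t → 0 ≤ η t) {x₀ x₁ : X} (hx : x₀ ≠ x₁) :
    ∃ b : ℝ → ℝ, Tendsto b (𝓝 0) (𝓝 0) ∧
      ∀ f : X → X, QS η f → ∀ x y, dist (f x) (f y) ≤ b (dist x y) := by
  refine ⟨fun s => η (2 * |s| / dist x₀ x₁) * diam (univ : Set X), ?_, fun f hf x y => ?_⟩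
  · have hscale : Tendsto (fun s : ℝ => 2 * |s| / dist x₀ x₁) (𝓝 0) (𝓝[≥] 0) := by
      refine tendsto_nhdsWithin_of_tendsto_nhds_of_eventually_within _ ?_ (.of_forall fun s => ?_)
      · simpa using ((continuous_const.mul continuous_abs).div_const (dist x₀ x₁)).tendsto 0
      · exact div_nonneg (by positivity) dist_nonneg
    simpa using (hη.comp hscale).mul_const (diam (univ : Set X))
  · simpa only [abs_of_nonneg dist_nonneg] using hf.dist_le hη_nonneg hx x y

theorem of_tendsto {ι : Type*} {l : Filter ι} [l.NeBot] {F : ι → X → X} {g : X → X}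
    (hF : ∀ i, QS η (F i)) (hg : ∀ x, Tendsto (F · x) l (𝓝 (g x))) : QS η g :=
  fun a b x t ht hle => le_of_tendsto_of_tendsto ((hg x).dist (hg a))
    (((hg x).dist (hg b)).const_mul (η t)) (.of_forall fun i => hF i a b x t ht hle)

theorem eq_of_apply_eq {g : X → X} (hg : QS η g) {a b : X} (hab : a ≠ b) (hgab : g a = g b)
    (y : X) : g y = g a := by
  have hpos : 0 < dist a b := dist_pos.2 hab
  have h := hg y b a (dist a y / dist a b) (by positivity) (div_mul_cancel₀ _ hpos.ne').ge
  rw [← hgab, dist_self, mul_zero] at h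
  exact (dist_le_zero.1 h).symm

theorem injective_of_ne {g : X → X} (hg : QS η g) {x₀ x₁ : X} (h : g x₀ ≠ g x₁) :
    Injective g := fun a b hgab => by
  by_contra hab
  exact h ((hg.eq_of_apply_eq hab hgab x₀).trans (hg.eq_of_apply_eq hab hgab x₁).symm)

end QS

theorem quasisymmetric_normal_family_general {X : Type*} [MetricSpace X] [CompactSpace X]
    (η : ℝ → ℝ) (hη0 : η 0 = 0)
    (hcont : ContinuousOn η (Set.Ici (0 : ℝ)))
    (f : ℕ → X ≃ₜ X) (hf : ∀ n, QS η (f n))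
    (x₀ x₁ : X) (c : ℝ) (hc : 0 < c)
    (hfix : ∀ n, f n x₀ = x₀) (hdist : ∀ n, dist (f n x₁) x₀ = c) :
    ∃ φ : ℕ → ℕ, StrictMono φ ∧ ∃ g : X → X,
      TendstoUniformly (fun n x => f (φ n) x) g atTop ∧ QS η g ∧
        Topology.IsEmbedding g := by
  have hx : x₀ ≠ x₁ := by
    rintro rfl
    exact hc.ne' (by rw [← hdist 0, hfix, dist_self])
  have hη_nonneg : ∀ t, 0 ≤ t → 0 ≤ η t := fun t ht => (hf 0).nonneg (f 0).injective hx ht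
  have hη : Tendsto η (𝓝[≥] 0) (𝓝 0) := by
    simpa only [ContinuousWithinAt, hη0] using hcont 0 self_mem_Ici
  obtain ⟨b, hb, hfb⟩ := QS.exists_modulus hη hη_nonneg hx
  obtain ⟨g, -, φ, hφ, hlim⟩ := (isCompact_setOf_dist_le_modulus hb).tendsto_subseq
    (x := fun n => (f n : C(X, X))) fun n => hfb _ (hf n)
  have hunif := ContinuousMap.tendsto_iff_tendstoUniformly.1 hlim
  have hpt : ∀ x, Tendsto (fun n => f (φ n) x) atTop (𝓝 (g x)) := hunif.tendsto_at
  have hg : QS η g := QS.of_tendsto (fun n => hf (φ n)) hpt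
  have hg₀ : g x₀ = x₀ := tendsto_nhds_unique (hpt x₀) (by simp [hfix])
  have hg₁ : dist (g x₁) x₀ = c :=
    tendsto_nhds_unique ((hpt x₁).dist tendsto_const_nhds) (by simp [hdist])
  have hinj : Injective g :=
    hg.injective_of_ne fun h => hc.ne' (by rw [← hg₁, ← h, hg₀, dist_self])
  exact ⟨φ, hφ, g, hunif, hg, (g.continuous.isClosedEmbedding hinj).isEmbedding⟩

/-- A sequence of `η`-quasisymmetric homeomorphisms of a compact metric space fixing a
point `x₀` and keeping `x₁` at constant positive distance `c` from `x₀` has a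
subsequence converging uniformly to an `η`-quasisymmetric embedding. -/
theorem quasisymmetric_normal_family {X : Type*} [MetricSpace X] [CompactSpace X]
    (η : ℝ → ℝ) (hη0 : η 0 = 0) (hmono : StrictMonoOn η (Set.Ici (0 : ℝ)))
    (hcont : ContinuousOn η (Set.Ici (0 : ℝ)))
    (hηpos : ∀ t : ℝ, 0 ≤ t → 0 ≤ η t)
    (f : ℕ → X ≃ₜ X) (hf : ∀ n, QS η (f n))
    (x₀ x₁ : X) (c : ℝ) (hc : 0 < c)
    (hfix : ∀ n, f n x₀ = x₀) (hdist : ∀ n, dist (f n x₁) x₀ = c) :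
    ∃ φ : ℕ → ℕ, StrictMono φ ∧ ∃ g : X → X,
      TendstoUniformly (fun n x => f (φ n) x) g atTop ∧ QS η g ∧
        Topology.IsEmbedding g :=
  quasisymmetric_normal_family_general η hη0 hcont f hf x₀ x₁ c hc hfix hdist
end
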